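/- Let λ be a partition and b a semistandard Young tableau of shape λ with entries in the positive integers. Then b is μ-distinguished for some partition μ if and only if (1) ε_i(b) = 0 for every odd i, and (2) φ_i(b) is even for every odd i. Moreover, in that case the minimal such μ is μ_b = Σ_i (φ_{2i}(b) mod 2) ω_{2i}. -/

import Mathlib

/-!
Both conditions on `ν` and `δ` are coordinatewise in the basis of fundamental weights: since
row `j` of a partition is the sum of its `ω_i`-coefficients for `i > j`, all parts are even iff
every coefficient is even, and all multiplicities are even iff every odd coefficient vanishes;
conversely every finitely supported coefficient vector comes from a partition. So `b` is
`μ`-distinguished iff `φ_i(b) + μ_i` is even for all `i` and `ε_i(b) = μ_i = 0` for odd `i`,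
and both the characterization and the minimality of `μ_b` are parity bookkeeping.
-/

open scoped Classical

noncomputable section

namespace GE

/-- The coefficient of the `i`-th fundamental weight (`i ≥ 1`) in the dominant weight
corresponding to the partition `μ`: the number of columns of the Young diagram of `μ`
of height exactly `i`. -/
def coord (μ : YoungDiagram) (i : ℕ) : ℕ := μ.rowLen (i - 1) - μ.rowLen i

/-- The Japanese reading word of a semistandard Young tableau: columns are read from right
to left, each column from top to bottom. -/
def jword {μ : YoungDiagram} (T : SemistandardYoungTableau μ) : List ℕ :=
  (((List.range (μ.rowLen 0)).reverse).map fun j =>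
    (List.range (μ.colLen j)).map fun i => T i j).flatten

/-- The crystal statistic `ε_i` of a word, via the bracketing rule. -/
def wordEps (i : ℕ) (w : List ℕ) : ℕ :=
  (Finset.range (w.length + 1)).sup fun k => (w.take k).count (i + 1) - (w.take k).count i

/-- The crystal statistic `φ_i` of a word, via the bracketing rule. -/
def wordPhi (i : ℕ) (w : List ℕ) : ℕ :=
  (Finset.range (w.length + 1)).sup fun k => (w.drop k).count i - (w.drop k).count (i + 1)

/-- The crystal statistic `ε_i` of a semistandard tableau. -/
def eps (i : ℕ) {μ : YoungDiagram} (T : SemistandardYoungTableau μ) : ℕ := wordEps i (jword T)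

/-- The crystal statistic `φ_i` of a semistandard tableau. -/
def phi (i : ℕ) {μ : YoungDiagram} (T : SemistandardYoungTableau μ) : ℕ := wordPhi i (jword T)

/-- The number of entries of `T` equal to `k`. -/
def cnt {μ : YoungDiagram} (T : SemistandardYoungTableau μ) (k : ℕ) : ℕ := (jword T).count k

/-- All entries of `T` lie in the alphabet `{1, …, m}`. -/
def EntriesIn {μ : YoungDiagram} (T : SemistandardYoungTableau μ) (m : ℕ) : Prop :=
  ∀ i j, (i, j) ∈ μ → 1 ≤ T i j ∧ T i j ≤ m

/-- All entries of `T` are positive integers. -/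
def PosEntries {μ : YoungDiagram} (T : SemistandardYoungTableau μ) : Prop :=
  ∀ i j, (i, j) ∈ μ → 1 ≤ T i j

/-- The partition `ν` has all parts even (`ν ∈ 𝒫^{(2)}`). -/
def EvenParts (ν : YoungDiagram) : Prop := ∀ i, Even (ν.rowLen i)

/-- Every part of `δ` occurs with even multiplicity, i.e. `δ_{2i-1} = δ_{2i}` for all `i ≥ 1`
(`δ ∈ 𝒫^{(1,1)}`). -/
def EvenMult (δ : YoungDiagram) : Prop := ∀ i, δ.rowLen (2 * i) = δ.rowLen (2 * i + 1)

/-- `b` is `μ`-distinguished: there are `ν ∈ 𝒫^{(2)}` and `δ ∈ 𝒫^{(1,1)}` with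
`φ(b) = ν - μ` and `ε(b) = δ - μ`, as equalities of weights written in the basis of the
fundamental weights `ω_i` (a partition `κ` having `ω_i`-coefficient `coord κ i`). -/
def Distinguished {lam : YoungDiagram} (b : SemistandardYoungTableau lam)
    (μ : YoungDiagram) : Prop :=
  ∃ ν δ : YoungDiagram, EvenParts ν ∧ EvenMult δ ∧
    (∀ i, 1 ≤ i → coord ν i = phi i b + coord μ i) ∧
    (∀ i, 1 ≤ i → coord δ i = eps i b + coord μ i)

/-- The coefficient of `ω_i` in `μ_b = Σ_i (φ_{2i}(b) mod 2) ω_{2i}`. -/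
def muBcoord {lam : YoungDiagram} (b : SemistandardYoungTableau lam) (i : ℕ) : ℕ :=
  if Even i ∧ 1 ≤ i then phi i b % 2 else 0

/-- The size `|φ(b) + μ_b|` of the weight `φ(b) + μ_b` (a column of height `i`, i.e. the
fundamental weight `ω_i`, contributing `i` boxes). -/
def statB {lam : YoungDiagram} (b : SemistandardYoungTableau lam) : ℕ :=
  ∑ᶠ i : ℕ, i * (phi i b + muBcoord b i)

/-- `κ ≤_⊞ μ`, i.e. `μ - κ ∈ 𝒫^{⊞} = 𝒫^{(2)} ∩ 𝒫^{(1,1)}`; in terms of the coefficients of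
the fundamental weights: the difference `μ - κ` is nonnegative, vanishes in each odd
coordinate, and is even in each coordinate. -/
def leB (κ μ : YoungDiagram) : Prop :=
  ∀ i, 1 ≤ i → coord κ i ≤ coord μ i ∧ (Odd i → coord κ i = coord μ i) ∧
    Even (coord μ i - coord κ i)

end GE

namespace YoungDiagram

theorem exists_rowLen_eq_of_antitone (f : ℕ → ℕ) (hf : Antitone f) {N : ℕ} (hN : f N = 0) :
    ∃ μ : YoungDiagram, ∀ i, μ.rowLen i = f i := by
  let cells := (Finset.range N ×ˢ Finset.range (f 0)).filter fun c => c.2 < f c.1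
  have mem_cells : ∀ c : ℕ × ℕ, c ∈ cells ↔ c.2 < f c.1 := by
    rintro ⟨i, j⟩
    simp only [cells, Finset.mem_filter, Finset.mem_product, Finset.mem_range,
      and_iff_right_iff_imp]
    intro hj
    refine ⟨?_, hj.trans_le (hf (Nat.zero_le i))⟩
    by_contra hi
    have := hf (not_lt.mp hi)
    omega
  refine ⟨⟨cells, fun a c hca ha => ?_⟩, fun i => eq_of_forall_lt_iff fun j => ?_⟩
  · rw [Finset.mem_coe, mem_cells] at ha ⊢
    exact (hca.2.trans_lt ha).trans_le (hf hca.1)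
  · rw [← mem_iff_lt_rowLen]
    exact mem_cells (i, j)

theorem rowLen_eq_zero_of_colLen_le (μ : YoungDiagram) {i : ℕ} (h : μ.colLen 0 ≤ i) :
    μ.rowLen i = 0 := by
  by_contra hne
  have := mem_iff_lt_colLen.mp (mem_iff_lt_rowLen.mpr (Nat.pos_of_ne_zero hne))
  omega

end YoungDiagram

namespace GE

theorem rowLen_eq_coord_add_rowLen (μ : YoungDiagram) (j : ℕ) :
    μ.rowLen j = coord μ (j + 1) + μ.rowLen (j + 1) := by
  have := μ.rowLen_anti j (j + 1) j.le_succ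
  simp only [coord, Nat.add_sub_cancel]
  omega

theorem coord_eq_zero_of_colLen_lt (μ : YoungDiagram) {i : ℕ} (h : μ.colLen 0 < i) :
    coord μ i = 0 := by
  simp [coord, μ.rowLen_eq_zero_of_colLen_le (Nat.le_sub_one_of_lt h)]

theorem exists_coord_eq (c : ℕ → ℕ) (N : ℕ) (hc : ∀ i, N ≤ i → c i = 0) :
    ∃ μ : YoungDiagram, ∀ i, 1 ≤ i → coord μ i = c i := by
  -- row `j` has length `c (j + 1) + c (j + 2) + ⋯`
  let f : ℕ → ℕ := fun j => ∑ k ∈ Finset.range N, c (j + 1 + k)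
  have hstep : ∀ j, f j = c (j + 1) + f (j + 1) := by
    intro j
    have h := Finset.sum_range_succ' (fun k => c (j + 1 + k)) N
    have hshift : (fun k => c (j + 1 + (k + 1))) = fun k => c (j + 1 + 1 + k) :=
      funext fun k => congrArg c (by omega)
    rw [Finset.sum_range_succ, hc _ (by omega), add_zero, hshift, add_zero] at h
    exact h.trans (add_comm _ _)
  have hfN : f N = 0 := Finset.sum_eq_zero fun k _ => hc _ (by omega)
  obtain ⟨μ, hμ⟩ := YoungDiagram.exists_rowLen_eq_of_antitone f
    (antitone_nat_of_succ_le fun j => (hstep j).symm ▸ Nat.le_add_left _ _) hfN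
  refine ⟨μ, fun i hi => ?_⟩
  obtain ⟨j, rfl⟩ := Nat.exists_eq_add_of_le' hi
  rw [coord, Nat.add_sub_cancel, hμ, hμ, hstep j, Nat.add_sub_cancel]

theorem evenParts_iff {ν : YoungDiagram} : EvenParts ν ↔ ∀ i, 1 ≤ i → Even (coord ν i) := by
  refine ⟨fun h i hi => ?_, fun h => ?_⟩
  · obtain ⟨j, rfl⟩ := Nat.exists_eq_add_of_le' hi
    have := h j
    rw [rowLen_eq_coord_add_rowLen, Nat.even_add] at this
    exact this.mpr (h (j + 1))
  · suffices ∀ n j, ν.colLen 0 ≤ j + n → Even (ν.rowLen j) from fun j => this _ j le_add_self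
    intro n
    induction n with
    | zero => exact fun j hj => by rw [ν.rowLen_eq_zero_of_colLen_le (by omega)]; exact ⟨0, rfl⟩
    | succ n ih =>
      intro j hj
      rw [rowLen_eq_coord_add_rowLen]
      exact (h _ le_add_self).add (ih _ (by omega))

theorem evenMult_iff {δ : YoungDiagram} : EvenMult δ ↔ ∀ i, Odd i → coord δ i = 0 := by
  refine ⟨fun h i ⟨k, hk⟩ => ?_, fun h k => ?_⟩
  · rw [hk, coord, Nat.add_sub_cancel, h k, Nat.sub_self]
  · have hk := h (2 * k + 1) ⟨k, rfl⟩
    have := δ.rowLen_anti (2 * k) (2 * k + 1) (by omega)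
    rw [coord, Nat.add_sub_cancel] at hk
    omega

theorem wordPhi_eq_zero_of_notMem {i : ℕ} {w : List ℕ} (h : i ∉ w) : wordPhi i w = 0 := by
  refine Nat.le_zero.mp (Finset.sup_le fun k _ => ?_)
  rw [List.count_eq_zero.mpr fun hi => h ((List.drop_sublist k w).subset hi)]
  exact (Nat.zero_sub _).le

theorem wordEps_eq_zero_of_notMem {i : ℕ} {w : List ℕ} (h : i + 1 ∉ w) : wordEps i w = 0 := by
  refine Nat.le_zero.mp (Finset.sup_le fun k _ => ?_)
  rw [List.count_eq_zero.mpr fun hi => h ((List.take_sublist k w).subset hi)]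
  exact (Nat.zero_sub _).le

theorem notMem_of_sum_lt {i : ℕ} {l : List ℕ} (h : l.sum < i) : i ∉ l :=
  fun hi => (List.le_sum_of_mem hi).not_gt h

section Tableau

variable {lam : YoungDiagram} (b : SemistandardYoungTableau lam)

theorem phi_eq_zero_of_sum_lt {i : ℕ} (h : (jword b).sum < i) : phi i b = 0 :=
  wordPhi_eq_zero_of_notMem (notMem_of_sum_lt h)

theorem eps_eq_zero_of_sum_lt {i : ℕ} (h : (jword b).sum < i) : eps i b = 0 :=
  wordEps_eq_zero_of_notMem (notMem_of_sum_lt (by omega))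

theorem distinguished_iff (μ : YoungDiagram) :
    Distinguished b μ ↔ (∀ i, 1 ≤ i → Even (phi i b + coord μ i)) ∧
      ∀ i, Odd i → eps i b = 0 ∧ coord μ i = 0 := by
  constructor
  · rintro ⟨ν, δ, hν, hδ, hνμ, hδμ⟩
    refine ⟨fun i hi => hνμ i hi ▸ evenParts_iff.mp hν i hi, fun i hi => ?_⟩
    have := hδμ i hi.pos
    rw [evenMult_iff.mp hδ i hi] at this
    omega
  · rintro ⟨hφ, hε⟩
    obtain ⟨N, hN⟩ : ∃ N, ∀ i, N ≤ i → phi i b = 0 ∧ eps i b = 0 ∧ coord μ i = 0 :=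
      ⟨(jword b).sum + μ.colLen 0 + 1, fun i hi => ⟨phi_eq_zero_of_sum_lt b (by omega),
        eps_eq_zero_of_sum_lt b (by omega), coord_eq_zero_of_colLen_lt μ (by omega)⟩⟩
    obtain ⟨ν, hν⟩ := exists_coord_eq (fun i => phi i b + coord μ i) N fun i hi => by
      simp [hN i hi]
    obtain ⟨δ, hδ⟩ := exists_coord_eq (fun i => eps i b + coord μ i) N fun i hi => by
      simp [hN i hi]
    refine ⟨ν, δ, evenParts_iff.mpr fun i hi => hν i hi ▸ hφ i hi,
      evenMult_iff.mpr fun i hi => ?_, hν, hδ⟩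
    rw [hδ i hi.pos, (hε i hi).1, (hε i hi).2]

theorem muBcoord_of_odd {i : ℕ} (hi : Odd i) : muBcoord b i = 0 :=
  if_neg fun h => Nat.not_even_iff_odd.mpr hi h.1

theorem muBcoord_of_even {i : ℕ} (hi : Even i) (hi₁ : 1 ≤ i) : muBcoord b i = phi i b % 2 :=
  if_pos ⟨hi, hi₁⟩

theorem exists_coord_eq_muBcoord : ∃ μb : YoungDiagram, ∀ i, 1 ≤ i → coord μb i = muBcoord b i :=
  exists_coord_eq (muBcoord b) ((jword b).sum + 1) fun i hi => by
    simp [muBcoord, phi_eq_zero_of_sum_lt b (by omega : (jword b).sum < i)]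

variable {b}

theorem Distinguished.eps_eq_zero {μ : YoungDiagram} (h : Distinguished b μ) {i : ℕ}
    (hi : Odd i) : eps i b = 0 :=
  (((distinguished_iff b μ).mp h).2 i hi).1

theorem Distinguished.even_phi {μ : YoungDiagram} (h : Distinguished b μ) {i : ℕ}
    (hi : Odd i) : Even (phi i b) := by
  obtain ⟨hφ, hε⟩ := (distinguished_iff b μ).mp h
  simpa [(hε i hi).2] using hφ i hi.pos

theorem distinguished_of_coord_eq_muBcoord {μb : YoungDiagram}
    (hμb : ∀ i, 1 ≤ i → coord μb i = muBcoord b i) (hε : ∀ i, Odd i → eps i b = 0)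
    (hφ : ∀ i, Odd i → Even (phi i b)) : Distinguished b μb := by
  refine (distinguished_iff b μb).mpr ⟨fun i hi => ?_, fun i hi => ?_⟩
  · rw [hμb i hi]
    rcases Nat.even_or_odd i with he | ho
    · rw [muBcoord_of_even b he hi, Nat.even_iff]
      omega
    · rw [muBcoord_of_odd b ho, add_zero]
      exact hφ i ho
  · exact ⟨hε i hi, (hμb i hi.pos).trans (muBcoord_of_odd b hi)⟩

theorem leB_of_distinguished {μb μ : YoungDiagram}
    (hμb : ∀ i, 1 ≤ i → coord μb i = muBcoord b i) (h : Distinguished b μ) : leB μb μ := by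
  obtain ⟨hφ, hε⟩ := (distinguished_iff b μ).mp h
  intro i hi
  rw [hμb i hi]
  rcases Nat.even_or_odd i with he | ho
  · have := Nat.even_iff.mp (hφ i hi)
    rw [muBcoord_of_even b he hi, Nat.even_iff]
    exact ⟨by omega, fun ho => absurd he (Nat.not_even_iff_odd.mpr ho), by omega⟩
  · rw [muBcoord_of_odd b ho, (hε i ho).2]
    exact ⟨le_rfl, fun _ => rfl, ⟨0, rfl⟩⟩

end Tableau

theorem distinguished_characterization_general (lam : YoungDiagram)
    (b : SemistandardYoungTableau lam) :
    ((∃ μ : YoungDiagram, Distinguished b μ) ↔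
      ((∀ i, Odd i → eps i b = 0) ∧ (∀ i, Odd i → Even (phi i b)))) ∧
    ((∃ μ : YoungDiagram, Distinguished b μ) →
      ∀ μb : YoungDiagram, (∀ i, 1 ≤ i → coord μb i = muBcoord b i) →
        Distinguished b μb ∧ ∀ μ : YoungDiagram, Distinguished b μ → leB μb μ) := by
  refine ⟨⟨fun ⟨μ, hμ⟩ => ⟨fun _ => hμ.eps_eq_zero, fun _ => hμ.even_phi⟩,
    fun ⟨hε, hφ⟩ => ?_⟩, fun ⟨μ, hμ⟩ μb hμb => ?_⟩
  · obtain ⟨μb, hμb⟩ := exists_coord_eq_muBcoord b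
    exact ⟨μb, distinguished_of_coord_eq_muBcoord hμb hε hφ⟩
  · exact ⟨distinguished_of_coord_eq_muBcoord hμb (fun _ => hμ.eps_eq_zero)
      (fun _ => hμ.even_phi), fun _ => leB_of_distinguished hμb⟩

/-- `b` is `μ`-distinguished for some partition `μ` if and only if
`ε_i(b) = 0` for every odd `i` and `φ_i(b)` is even for every odd `i`; moreover, in that case
the minimal such `μ` is `μ_b = Σ_i (φ_{2i}(b) mod 2) ω_{2i}`. -/
theorem distinguished_characterization (lam : YoungDiagram)
    (b : SemistandardYoungTableau lam) (hpos : PosEntries b) :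
    ((∃ μ : YoungDiagram, Distinguished b μ) ↔
      ((∀ i, Odd i → eps i b = 0) ∧ (∀ i, Odd i → Even (phi i b)))) ∧
    ((∃ μ : YoungDiagram, Distinguished b μ) →
      ∀ μb : YoungDiagram, (∀ i, 1 ≤ i → coord μb i = muBcoord b i) →
        Distinguished b μb ∧ ∀ μ : YoungDiagram, Distinguished b μ → leB μb μ) :=
  distinguished_characterization_general lam b

end GE
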